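/- For every n ≥ 2, the monoid CI_n has rank 2; that is, CI_n is generated as a monoid by some set of 2 elements, and no set of fewer than 2 elements generates CI_n. -/

import Mathlib

/-!
Common setup.  `Ω_n = {1, …, n}` is modelled by `Fin n`, where `a : Fin n`
represents the element `a + 1` of `Ω_n`.  Partial maps on `Ω_n` are modelled as
functions `Fin n → Option (Fin n)`, composed left-to-right (as in the paper),
which makes them a monoid (the monoid `PT_n` of all partial transformations).
-/

/-- Partial maps on `Ω_n`, composed left-to-right. -/
abbrev PMap (n : ℕ) := Fin n → Option (Fin n)

instance PMap.instMonoid (n : ℕ) : Monoid (PMap n) where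
  one := fun a => some a
  mul f g := fun a => (f a).bind g
  one_mul f := rfl
  mul_one f := funext fun a => by
    show (f a).bind (fun b => some b) = f a
    cases f a <;> rfl
  mul_assoc f g h := funext fun a => by
    show ((f a).bind g).bind h = (f a).bind (fun b => (g b).bind h)
    cases f a <;> rfl

/-- The cyclic permutation `g : i ↦ i + 1` (for `1 ≤ i ≤ n-1`), `n ↦ 1`, of `Ω_n`,
as a (total) partial map. -/
def gmap (n : ℕ) : PMap n := fun a => some (finRotate n a)

/-- `emap n i` is the partial identity on `Ω_n ∖ {i}` (the map `e_i` of the paper);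
recall that `a : Fin n` represents the element `a + 1` of `Ω_n = {1, …, n}`. -/
def emap (n i : ℕ) : PMap n := fun a => if (a : ℕ) + 1 = i then none else some a

/-- The cyclic inverse monoid `CI_n`, as the set of all restrictions of elements of
`C_n = {1, g, g², …}` (including the empty map). -/
def CIn (n : ℕ) : Set (PMap n) :=
  {f | ∃ k : ℕ, ∀ a : Fin n, f a ≠ none → f a = (gmap n ^ k) a}

/-- A partial map is order-preserving if it preserves `≤` on its domain. -/
def OrdPres {n : ℕ} (f : PMap n) : Prop :=
  ∀ a b c d : Fin n, a ≤ b → f a = some c → f b = some d → c ≤ d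

/-- `OCI_n`: the order-preserving elements of `CI_n`. -/
def OCIn (n : ℕ) : Set (PMap n) := {f | f ∈ CIn n ∧ OrdPres f}

/-- `x = g e_1`, the partial map with domain `{1, …, n-1}` sending `i ↦ i + 1`. -/
def xmap (n : ℕ) : PMap n := gmap n * emap n 1

/-- `y = x⁻¹`, the partial map with domain `{2, …, n}` sending `i ↦ i - 1`. -/
def ymap (n : ℕ) : PMap n := fun a =>
  if 1 ≤ (a : ℕ) then some ⟨(a : ℕ) - 1, Nat.lt_of_le_of_lt (Nat.sub_le _ _) a.isLt⟩ else none

namespace CIAux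

lemma mul_apply {n : ℕ} (f g : PMap n) (a : Fin n) : (f * g) a = (f a).bind g := rfl
lemma one_apply {n : ℕ} (a : Fin n) : (1 : PMap n) a = some a := rfl

lemma gpow_apply (m k : ℕ) (a : Fin (m+2)) :
    (gmap (m+2) ^ k) a = some ⟨((a:ℕ) + k) % (m+2), Nat.mod_lt _ (by omega)⟩ := by
  induction k with
  | zero =>
    rw [pow_zero, one_apply]
    congr 1
    ext
    simp [Nat.mod_eq_of_lt a.isLt]
  | succ k ih =>
    rw [pow_succ, mul_apply, ih]
    show (gmap (m+2)) _ = _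
    unfold gmap
    congr 1
    have h1 : finRotate (m+1+1) (⟨((a:ℕ) + k) % (m+2), Nat.mod_lt _ (by omega)⟩ : Fin (m+1+1)) = ⟨((a:ℕ) + k) % (m+2), Nat.mod_lt _ (by omega)⟩ + 1 := finRotate_succ_apply _
    rw [h1]
    ext
    rw [Fin.add_def]
    show (((a:ℕ) + k) % (m+2) + (1:Fin (m+2)).val) % (m+2) = _
    rw [show ((1:Fin (m+2)).val) = 1 from rfl, Nat.mod_add_mod]
    show _ = ((a:ℕ) + (k+1)) % (m+2)
    rw [Nat.add_assoc]

lemma xmap_none (m : ℕ) (a : Fin (m+2)) (ha : (a:ℕ) = m+1) : xmap (m+2) a = none := by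
  have h1 : gmap (m+2) a = some ⟨((a:ℕ) + 1) % (m+2), Nat.mod_lt _ (by omega)⟩ := by
    rw [← pow_one (gmap (m+2)), gpow_apply]
  show (gmap (m+2) a).bind (emap (m+2) 1) = none
  rw [h1]
  show emap (m+2) 1 _ = none
  unfold emap
  rw [if_pos]
  simp [ha, Nat.mod_self]

lemma xmap_some (m : ℕ) (a : Fin (m+2)) (ha : (a:ℕ) < m+1) :
    xmap (m+2) a = some ⟨(a:ℕ)+1, by omega⟩ := by
  have h1 : gmap (m+2) a = some ⟨(a:ℕ)+1, by omega⟩ := by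
    rw [← pow_one (gmap (m+2)), gpow_apply]
    congr 1
    ext
    exact Nat.mod_eq_of_lt (by omega)
  show (gmap (m+2) a).bind (emap (m+2) 1) = _
  rw [h1]
  show emap (m+2) 1 _ = _
  unfold emap
  rw [if_neg]
  show ¬((a:ℕ) + 1 + 1 = 1)
  omega

/-- partial identity with domain the complement of `{t}` -/
def Emap (n : ℕ) (t : Fin n) : PMap n := fun a => if a = t then none else some a

lemma Emap_eq (m : ℕ) (t : Fin (m+2)) :
    Emap (m+2) t = gmap (m+2) ^ (m+1 - (t:ℕ)) * xmap (m+2) * gmap (m+2) ^ (t:ℕ) := by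
  funext a
  rw [mul_apply, mul_apply, gpow_apply]
  set p := m + 1 - (t:ℕ) with hp
  have ht : (t:ℕ) < m+2 := t.isLt
  have hav : (a:ℕ) < m+2 := a.isLt
  show Emap (m+2) t a = (xmap (m+2) ⟨((a:ℕ)+p) % (m+2), _⟩).bind _
  by_cases h : a = t
  · have hv : ((a:ℕ) + p) % (m+2) = m+1 := by
      subst h
      rw [Nat.mod_eq_of_lt (by omega)]
      omega
    rw [xmap_none m _ hv]
    rw [show Emap (m+2) t a = none from if_pos h]
    rfl
  · have hne : (a:ℕ) ≠ (t:ℕ) := fun hh => h (Fin.ext hh)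
    have hv : ((a:ℕ) + p) % (m+2) < m+1 := by
      rcases Nat.lt_or_ge ((a:ℕ) + p) (m+2) with hlt | hge
      · rw [Nat.mod_eq_of_lt hlt]; omega
      · rw [Nat.mod_eq_sub_mod hge, Nat.mod_eq_of_lt (by omega)]; omega
    rw [xmap_some m _ hv]
    show Emap (m+2) t a = (gmap (m+2) ^ (t:ℕ)) _
    rw [gpow_apply, show Emap (m+2) t a = some a from if_neg h, Option.some_inj]
    ext
    show (a:ℕ) = ((((a:ℕ) + p) % (m+2) + 1) + (t:ℕ)) % (m+2)
    rw [Nat.add_assoc, Nat.mod_add_mod, show (a:ℕ) + p + (1 + (t:ℕ)) = (a:ℕ) + (m+2) by omega,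
      Nat.add_mod_right, Nat.mod_eq_of_lt hav]

lemma list_prod_Emap (n : ℕ) (L : List (Fin n)) :
    (L.map (Emap n)).prod = fun a => if a ∈ L then none else some a := by
  induction L with
  | nil => funext a; simp [one_apply]
  | cons t L ih =>
    funext a
    rw [List.map_cons, List.prod_cons, mul_apply, ih]
    unfold Emap
    by_cases h : a = t
    · simp [h]
    · simp only [if_neg h, Option.bind_some, List.mem_cons]
      split_ifs with h1 h2 h3 <;> tauto

lemma one_mem_CIn (n : ℕ) : (1 : PMap n) ∈ CIn n :=
  ⟨0, fun a _ => by rw [pow_zero]⟩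

lemma mul_mem_CIn {n : ℕ} {f g : PMap n} (hf : f ∈ CIn n) (hg : g ∈ CIn n) :
    f * g ∈ CIn n := by
  obtain ⟨k, hk⟩ := hf; obtain ⟨l, hl⟩ := hg
  refine ⟨k + l, fun a ha => ?_⟩
  rw [mul_apply] at ha ⊢
  cases hfa : f a with
  | none => rw [hfa] at ha; exact absurd rfl ha
  | some b =>
    have h1 : f a = (gmap n ^ k) a := hk a (by rw [hfa]; exact Option.some_ne_none b)
    have hgb : g b ≠ none := by rw [hfa] at ha; exact ha
    have h2 : g b = (gmap n ^ l) b := hl b hgb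
    rw [pow_add, mul_apply, ← h1, hfa]
    exact h2

lemma gmap_mem_CIn (n : ℕ) : gmap n ∈ CIn n := ⟨1, fun a _ => by rw [pow_one]⟩

lemma xmap_mem_CIn (n : ℕ) : xmap n ∈ CIn n := by
  refine ⟨1, fun a ha => ?_⟩
  rw [pow_one]
  show (gmap n a).bind (emap n 1) = gmap n a
  have ha' : (gmap n a).bind (emap n 1) ≠ none := ha
  show emap (n) 1 (finRotate n a) = some (finRotate n a)
  have ha'' : emap n 1 (finRotate n a) ≠ none := ha'
  unfold emap at ha'' ⊢
  split_ifs with h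
  · exact absurd (if_pos h) ha''
  · rfl

def SubCIn (n : ℕ) : Submonoid (PMap n) where
  carrier := CIn n
  one_mem' := one_mem_CIn n
  mul_mem' := mul_mem_CIn

end CIAux

open CIAux

/-- For `n ≥ 2`, the monoid `CI_n` has rank `2`: some set of `2`
elements generates it, and no set with fewer than `2` elements generates it. -/
theorem CIn.rank (n : ℕ) (hn : 2 ≤ n) :
    (∃ X : Set (PMap n), X.ncard = 2 ∧ (Submonoid.closure X : Set (PMap n)) = CIn n) ∧
    (∀ X : Set (PMap n), (Submonoid.closure X : Set (PMap n)) = CIn n → 2 ≤ X.ncard) := by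
  obtain ⟨m, rfl⟩ : ∃ m, n = m + 2 := ⟨n - 2, by omega⟩
  have hglast : gmap (m+2) ⟨m+1, by omega⟩ ≠ none := by
    unfold gmap; exact Option.some_ne_none _
  have hxlast : xmap (m+2) ⟨m+1, by omega⟩ = none := xmap_none m _ rfl
  have hgne1 : gmap (m+2) ≠ 1 := by
    intro h
    have h0 := congrFun h ⟨0, by omega⟩
    rw [← pow_one (gmap (m+2)), gpow_apply, one_apply, Option.some_inj, Fin.ext_iff] at h0
    simp only at h0
    rw [Nat.mod_eq_of_lt (by omega)] at h0
    omega
  constructor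
  · refine ⟨{gmap (m+2), xmap (m+2)}, ?_, ?_⟩
    · refine Set.ncard_pair ?_
      intro h
      have h1 := congrFun h ⟨m+1, by omega⟩
      rw [hxlast] at h1
      exact hglast h1
    · apply subset_antisymm
      · intro f hf
        have hle : Submonoid.closure {gmap (m+2), xmap (m+2)} ≤ SubCIn (m+2) := by
          rw [Submonoid.closure_le]
          intro z hz
          rcases hz with rfl | rfl
          · exact gmap_mem_CIn _
          · exact xmap_mem_CIn _
        exact hle hf
      · intro f hf
        obtain ⟨k, hk⟩ := hf
        classical
        set L : List (Fin (m+2)) := (List.finRange (m+2)).filter (fun a => f a = none) with hLdef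
        have hL : ∀ a, a ∈ L ↔ f a = none := by
          intro a
          simp [hLdef, List.mem_filter, List.mem_finRange]
        have hfe : f = (L.map (Emap (m+2))).prod * gmap (m+2) ^ k := by
          funext a
          rw [mul_apply, list_prod_Emap]
          show f a = (if a ∈ L then none else some a).bind (gmap (m+2) ^ k)
          by_cases h : f a = none
          · rw [if_pos ((hL a).mpr h), h]; rfl
          · rw [if_neg (fun hh => h ((hL a).mp hh))]
            exact hk a h
        rw [hfe]
        have hgmem : gmap (m+2) ∈ Submonoid.closure {gmap (m+2), xmap (m+2)} :=
          Submonoid.subset_closure (by left; rfl)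
        have hxmem : xmap (m+2) ∈ Submonoid.closure {gmap (m+2), xmap (m+2)} :=
          Submonoid.subset_closure (by right; rfl)
        refine mul_mem ?_ (pow_mem hgmem k)
        refine list_prod_mem ?_
        intro x hx
        simp only [List.mem_map] at hx
        obtain ⟨t, _, rfl⟩ := hx
        rw [Emap_eq]
        exact mul_mem (mul_mem (pow_mem hgmem _) hxmem) (pow_mem hgmem _)
  · intro X hX
    by_contra hlt
    push_neg at hlt
    have hfin : X.Finite := Set.toFinite X
    have hsub : X.Subsingleton := by
      intro a ha b hb
      exact (Set.ncard_le_one hfin).mp (by omega) a ha b hb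
    have hgmem : gmap (m+2) ∈ Submonoid.closure X := by
      have : gmap (m+2) ∈ (Submonoid.closure X : Set (PMap (m+2))) := by
        rw [hX]; exact gmap_mem_CIn _
      exact this
    have hxmem : xmap (m+2) ∈ Submonoid.closure X := by
      have : xmap (m+2) ∈ (Submonoid.closure X : Set (PMap (m+2))) := by
        rw [hX]; exact xmap_mem_CIn _
      exact this
    rcases hsub.eq_empty_or_singleton with rfl | ⟨f, rfl⟩
    · rw [Submonoid.closure_empty, Submonoid.mem_bot] at hgmem
      exact hgne1 hgmem
    · rw [Submonoid.mem_closure_singleton] at hgmem hxmem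
      obtain ⟨k, hk⟩ := hgmem
      obtain ⟨l, hl⟩ := hxmem
      have hnt : ∃ a, f a = none := by
        by_contra h
        push_neg at h
        have htot : ∀ j (a : Fin (m+2)), (f ^ j) a ≠ none := by
          intro j
          induction j with
          | zero => intro a; rw [pow_zero, one_apply]; exact Option.some_ne_none a
          | succ j ih =>
            intro a
            rw [pow_succ, mul_apply]
            cases hh : (f ^ j) a with
            | none => exact absurd hh (ih a)
            | some b => exact h b
        exact htot l ⟨m+1, by omega⟩ (hl ▸ hxlast)
      obtain ⟨a, ha⟩ := hnt
      rcases Nat.eq_zero_or_pos k with rfl | hkpos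
      · rw [pow_zero] at hk
        exact hgne1 hk.symm
      · obtain ⟨k', rfl⟩ : ∃ k', k = k' + 1 := ⟨k - 1, by omega⟩
        rw [pow_succ'] at hk
        have hc := congrFun hk a
        rw [mul_apply, ha] at hc
        unfold gmap at hc
        exact Option.some_ne_none _ (show (none : Option (Fin (m+2))) = _ from hc).symm
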